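/- There exist a graph G (the star K(1,4)), weight matrices P', P'' supported on G with P'·1 = P''·1 = 1, and second-order polynomials p₂', p₂'' with p₂'(1) = p₂''(1) = 1, such that the matrix (1/2)p₂'(P') + (1/2)p₂''(P'') cannot be written as p₂(P) for any symmetric P supported on G and second-order polynomial p₂ with p₂(1)=1. Hence the set {p₂(P) : P supported on G, p₂ degree-2, p₂(1)=1} is not convex. -/

import Mathlib

open Matrix

/-- The star graph `K(1,4)` on 5 nodes with center `0`. -/
def starGraph5 : SimpleGraph (Fin 5) where
  Adj i j := i ≠ j ∧ (i = 0 ∨ j = 0)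
  symm := ⟨by intro i j h; exact ⟨h.1.symm, h.2.symm⟩⟩
  loopless := ⟨by intro i h; exact h.1 rfl⟩

/-- `P` is supported on `G`: off-diagonal entries vanish outside the edges of `G`. -/
def SupportedOn (G : SimpleGraph (Fin 5)) (P : Matrix (Fin 5) (Fin 5) ℝ) : Prop :=
  ∀ i j : Fin 5, i ≠ j → ¬G.Adj i j → P i j = 0

/- Off the diagonal, between two leaves `i ≠ j` of the star, `c₀ + c₁ P + c₂ P²` has the single
entry `c₂ P i 0 P 0 j`, coming from the path through the centre. If `P'` only uses the edges to
leaves `1, 2` and `P''` only those to `3, 4`, the average of their squares is nonzero at `(1, 2)`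
and `(3, 4)` but vanishes at `(1, 3)`. For a single `P` the first two entries force `c₂`, `P 1 0`
and `P 0 3 = P 3 0` to be nonzero, hence also the entry at `(1, 3)`. -/

theorem Matrix.mul_apply_eq_of_forall_ne {n R : Type*} [Fintype n] [NonUnitalNonAssocSemiring R]
    (A B : Matrix n n R) {i j : n} (c : n) (h : ∀ k, k ≠ c → A i k * B k j = 0) :
    (A * B) i j = A i c * B c j :=
  Finset.sum_eq_single c (fun k _ hk => h k hk) (by simp)

namespace SupportedOn

variable {P : Matrix (Fin 5) (Fin 5) ℝ}

theorem starGraph5_apply_leaves (hP : SupportedOn starGraph5 P) {i j : Fin 5}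
    (hi : i ≠ 0) (hj : j ≠ 0) (hij : i ≠ j) : P i j = 0 :=
  hP i j hij (by simp [starGraph5, hi, hj])

theorem starGraph5_quadratic_apply_leaves (hP : SupportedOn starGraph5 P) (c₀ c₁ c₂ : ℝ)
    {i j : Fin 5} (hi : i ≠ 0) (hj : j ≠ 0) (hij : i ≠ j) :
    (c₀ • (1 : Matrix (Fin 5) (Fin 5) ℝ) + c₁ • P + c₂ • (P * P)) i j =
      c₂ * (P i 0 * P 0 j) := by
  have hsq : (P * P) i j = P i 0 * P 0 j := by
    refine P.mul_apply_eq_of_forall_ne P 0 fun k hk => ?_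
    by_cases hki : k = i
    · subst hki; simp [hP.starGraph5_apply_leaves hk hj hij]
    · simp [hP.starGraph5_apply_leaves hi hk (Ne.symm hki)]
  simp [hsq, hP.starGraph5_apply_leaves hi hj hij, one_apply_ne hij]

end SupportedOn

noncomputable def starWeights₁₂ : Matrix (Fin 5) (Fin 5) ℝ :=
  !![0, 1/2, 1/2, 0, 0;
     1/2, 1/2, 0, 0, 0;
     1/2, 0, 1/2, 0, 0;
     0, 0, 0, 1, 0;
     0, 0, 0, 0, 1]

noncomputable def starWeights₃₄ : Matrix (Fin 5) (Fin 5) ℝ :=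
  !![0, 0, 0, 1/2, 1/2;
     0, 1, 0, 0, 0;
     0, 0, 1, 0, 0;
     1/2, 0, 0, 1/2, 0;
     1/2, 0, 0, 0, 1/2]

theorem starWeights₁₂_isSymm : starWeights₁₂.IsSymm := by
  ext i j
  fin_cases i <;> fin_cases j <;> simp [starWeights₁₂]

theorem starWeights₃₄_isSymm : starWeights₃₄.IsSymm := by
  ext i j
  fin_cases i <;> fin_cases j <;> simp [starWeights₃₄]

theorem supportedOn_starWeights₁₂ : SupportedOn starGraph5 starWeights₁₂ := by
  intro i j
  fin_cases i <;> fin_cases j <;> simp [starGraph5, starWeights₁₂]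

theorem supportedOn_starWeights₃₄ : SupportedOn starGraph5 starWeights₃₄ := by
  intro i j
  fin_cases i <;> fin_cases j <;> simp [starGraph5, starWeights₃₄]

theorem starWeights₁₂_mulVec_one : starWeights₁₂ *ᵥ 1 = 1 := by
  ext i
  fin_cases i <;> simp [starWeights₁₂, mulVec, dotProduct, Fin.sum_univ_five] <;> norm_num

theorem starWeights₃₄_mulVec_one : starWeights₃₄ *ᵥ 1 = 1 := by
  ext i
  fin_cases i <;> simp [starWeights₃₄, mulVec, dotProduct, Fin.sum_univ_five] <;> norm_num

/-- Non-convexity: on the star `K(1,4)` there are weight matrices `P'`, `P''` and second-order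
polynomials `p₂'`, `p₂''` with `p₂'(1) = p₂''(1) = 1` such that
`(1/2)p₂'(P') + (1/2)p₂''(P'')` is not of the form `p₂(P)` for any weight matrix `P`
supported on the star and second-order polynomial `p₂` with `p₂(1)=1`. -/
theorem p2_image_not_convex :
    ∃ (P' P'' : Matrix (Fin 5) (Fin 5) ℝ) (c₀' c₁' c₂' c₀'' c₁'' c₂'' : ℝ),
      P'.IsSymm ∧ SupportedOn starGraph5 P' ∧ P' *ᵥ 1 = 1 ∧
      P''.IsSymm ∧ SupportedOn starGraph5 P'' ∧ P'' *ᵥ 1 = 1 ∧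
      c₀' + c₁' + c₂' = 1 ∧ c₀'' + c₁'' + c₂'' = 1 ∧
      ∀ (P : Matrix (Fin 5) (Fin 5) ℝ) (c₀ c₁ c₂ : ℝ),
        P.IsSymm → SupportedOn starGraph5 P → P *ᵥ 1 = 1 → c₀ + c₁ + c₂ = 1 →
        c₀ • (1 : Matrix (Fin 5) (Fin 5) ℝ) + c₁ • P + c₂ • (P * P) ≠
          (1 / 2 : ℝ) • (c₀' • (1 : Matrix (Fin 5) (Fin 5) ℝ) + c₁' • P' + c₂' • (P' * P')) +
          (1 / 2 : ℝ) • (c₀'' • (1 : Matrix (Fin 5) (Fin 5) ℝ) + c₁'' • P'' + c₂'' • (P'' * P'')) := by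
  refine ⟨starWeights₁₂, starWeights₃₄, 0, 0, 1, 0, 0, 1, starWeights₁₂_isSymm,
    supportedOn_starWeights₁₂, starWeights₁₂_mulVec_one, starWeights₃₄_isSymm,
    supportedOn_starWeights₃₄, starWeights₃₄_mulVec_one, by norm_num, by norm_num, ?_⟩
  intro P c₀ c₁ c₂ hsymm hP _ _ heq
  have entry : ∀ i j : Fin 5, i ≠ 0 → j ≠ 0 → i ≠ j →
      c₂ * (P i 0 * P 0 j) = 1 / 2 * (starWeights₁₂ i 0 * starWeights₁₂ 0 j) +
        1 / 2 * (starWeights₃₄ i 0 * starWeights₃₄ 0 j) := fun i j hi hj hij => by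
    have := congrFun₂ heq i j
    rw [hP.starGraph5_quadratic_apply_leaves _ _ _ hi hj hij] at this
    simpa only [Matrix.add_apply, Matrix.smul_apply, smul_eq_mul, one_mul,
      supportedOn_starWeights₁₂.starGraph5_quadratic_apply_leaves _ _ _ hi hj hij,
      supportedOn_starWeights₃₄.starGraph5_quadratic_apply_leaves _ _ _ hi hj hij] using this
  have h₁₂ : c₂ * (P 1 0 * P 0 2) ≠ 0 := by
    simp [entry 1 2 (by decide) (by decide) (by decide), starWeights₁₂, starWeights₃₄]
  have h₃₄ : c₂ * (P 3 0 * P 0 4) ≠ 0 := by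
    simp [entry 3 4 (by decide) (by decide) (by decide), starWeights₁₂, starWeights₃₄]
  have h₁₃ : c₂ * (P 1 0 * P 0 3) = 0 := by
    simp [entry 1 3 (by decide) (by decide) (by decide), starWeights₁₂, starWeights₃₄]
  rw [hsymm.apply 3 0] at h₁₃
  exact mul_ne_zero (left_ne_zero_of_mul h₁₂) (mul_ne_zero
    (left_ne_zero_of_mul (right_ne_zero_of_mul h₁₂))
    (left_ne_zero_of_mul (right_ne_zero_of_mul h₃₄))) h₁₃
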